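/- For every integer k ≥ 1 there exists a string over a binary alphabet whose novLZ3 parsing has size k and whose novLZ parsing has size 2k − 1 (i.e., Znon3 = k and Znon = 2k − 1). -/

import Mathlib

attribute [local instance] Classical.propDecidable

/-- `PermOv s i ℓ` : the substring of `s` of length `ℓ` starting at 0-indexed position `i`
has an occurrence starting at some earlier position `j < i` (possibly overlapping it). -/
def PermOv {α : Type*} (s : List α) (i ℓ : ℕ) : Prop :=
  ∃ j < i, (s.drop j).take ℓ = (s.drop i).take ℓ

/-- `PermNov s i ℓ` : the substring of `s` of length `ℓ` starting at 0-indexed position `i`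
has an occurrence starting at some position `j` with `j + ℓ ≤ i` (not overlapping it). -/
def PermNov {α : Type*} (s : List α) (i ℓ : ℕ) : Prop :=
  ∃ j, j + ℓ ≤ i ∧ (s.drop j).take ℓ = (s.drop i).take ℓ

/-- `PermOv3 s i ℓ` : the substring of `s` of length `ℓ - 1` starting at 0-indexed position `i`
(i.e. the phrase of length `ℓ` starting at `i` minus its last letter) has an occurrence
starting at some earlier position `j < i` (possibly overlapping). -/
def PermOv3 {α : Type*} (s : List α) (i ℓ : ℕ) : Prop :=
  ∃ j < i, (s.drop j).take (ℓ - 1) = (s.drop i).take (ℓ - 1)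

/-- `PermNov3 s i ℓ` : the substring of `s` of length `ℓ - 1` starting at 0-indexed position `i`
has an occurrence starting at some position `j` with `j + (ℓ - 1) ≤ i` (so this occurrence
ends before position `i`). -/
def PermNov3 {α : Type*} (s : List α) (i ℓ : ℕ) : Prop :=
  ∃ j, j + (ℓ - 1) ≤ i ∧ (s.drop j).take (ℓ - 1) = (s.drop i).take (ℓ - 1)

/-- Length of the greedy phrase starting at 0-indexed position `i`: the largest
`ℓ ≤ |s| - i` permitted by `P`, or `1` (a single letter) if no length is permitted. -/
noncomputable def phraseLen {α : Type*} (P : List α → ℕ → ℕ → Prop) (s : List α) (i : ℕ) : ℕ :=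
  max 1 (Nat.findGreatest (fun ℓ => P s i ℓ) (s.length - i))

/-- The list of phrases of the greedy parsing (w.r.t. the permission predicate `P`)
of the suffix of `s` starting at 0-indexed position `i`. -/
noncomputable def phrasesFrom {α : Type*} (P : List α → ℕ → ℕ → Prop) (s : List α) (i : ℕ) :
    List (List α) :=
  if _h : i < s.length then
    (s.drop i).take (phraseLen P s i) :: phrasesFrom P s (i + phraseLen P s i)
  else []
  termination_by s.length - i
  decreasing_by
    have h1 : 1 ≤ phraseLen P s i := by unfold phraseLen; exact Nat.le_max_left _ _
    omega

/-- The LZ parsing of `s` (phrases may overlap their earlier occurrences). -/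
noncomputable def lzPhrases {α : Type*} (s : List α) : List (List α) := phrasesFrom PermOv s 0
/-- The novLZ parsing of `s` (earlier occurrences may not overlap the phrases). -/
noncomputable def novlzPhrases {α : Type*} (s : List α) : List (List α) := phrasesFrom PermNov s 0
/-- The LZ3 parsing of `s`. -/
noncomputable def lz3Phrases {α : Type*} (s : List α) : List (List α) := phrasesFrom PermOv3 s 0
/-- The novLZ3 parsing of `s`. -/
noncomputable def novlz3Phrases {α : Type*} (s : List α) : List (List α) := phrasesFrom PermNov3 s 0

/-- `Zov`: the size (number of phrases) of the LZ parsing of `s`. -/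
noncomputable def zOv {α : Type*} (s : List α) : ℕ := (lzPhrases s).length
/-- `Znon`: the size of the novLZ parsing of `s`. -/
noncomputable def zNov {α : Type*} (s : List α) : ℕ := (novlzPhrases s).length
/-- `Zov₃`: the size of the LZ3 parsing of `s`. -/
noncomputable def zOv3 {α : Type*} (s : List α) : ℕ := (lz3Phrases s).length
/-- `Znon₃`: the size of the novLZ3 parsing of `s`. -/
noncomputable def zNov3 {α : Type*} (s : List α) : ℕ := (novlz3Phrases s).length

/-- `ts` is an LZ-type parsing of `s`: a decomposition of `s` into nonempty strings such that
each `tᵢ` is a single letter or occurs in `s[1..|t₁⋯tᵢ|-1]`. -/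
def IsLZTypeParsing {α : Type*} (s : List α) (ts : List (List α)) : Prop :=
  ts.flatten = s ∧ (∀ t ∈ ts, t ≠ []) ∧
    ∀ i (h : i < ts.length),
      ts[i].length = 1 ∨ ts[i] <:+: s.take ((ts.take (i + 1)).flatten.length - 1)

/-- `ts` is a novLZ-type parsing of `s`: a decomposition of `s` into nonempty strings such that
each `tᵢ` is a single letter or occurs in `t₁⋯tᵢ₋₁`. -/
def IsNovLZTypeParsing {α : Type*} (s : List α) (ts : List (List α)) : Prop :=
  ts.flatten = s ∧ (∀ t ∈ ts, t ≠ []) ∧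
    ∀ i (h : i < ts.length),
      ts[i].length = 1 ∨ ts[i] <:+: (ts.take i).flatten

/-- `ts` is an LZ3-type parsing of `s`: a decomposition of `s` into nonempty strings such that
each `tᵢ` minus its last letter occurs in `s[1..|t₁⋯tᵢ|-2]`. -/
def IsLZ3TypeParsing {α : Type*} (s : List α) (ts : List (List α)) : Prop :=
  ts.flatten = s ∧ (∀ t ∈ ts, t ≠ []) ∧
    ∀ i (h : i < ts.length),
      ts[i].dropLast <:+: s.take ((ts.take (i + 1)).flatten.length - 2)

/-- `ts` is a novLZ3-type parsing of `s`: a decomposition of `s` into nonempty strings such that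
each `tᵢ` minus its last letter occurs in `t₁⋯tᵢ₋₁`. -/
def IsNovLZ3TypeParsing {α : Type*} (s : List α) (ts : List (List α)) : Prop :=
  ts.flatten = s ∧ (∀ t ∈ ts, t ≠ []) ∧
    ∀ i (h : i < ts.length),
      ts[i].dropLast <:+: (ts.take i).flatten

/-!
The witness is `w₁ = 0`, `w_{t+1} = w_t w_t 1` (`doublingWord`), of length `2 ^ t - 1`.

Its novLZ3 parsing is `0 | w₁1 | w₂1 | ⋯ | w_{k-1}1`: the phrase starting after the prefix
`w_t` may drop its last letter and copy `w_t` from position `0`, and no phrase starting at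
`i` can be longer than `i + 1`.

Its novLZ parsing is `0 | 0 | 1 | 001 | 1w₂ | w₂1 | ⋯ | 1w_{k-2} | w_{k-2}1 | 1`. The phrase
`1w_t` is copied from the end of the first `w_t`, and `w_t1` from position `|w_t|`. Neither
extends: every occurrence of `w_t` in `w_k` starts at a sum of distinct Mersenne numbers
`2 ^ r - 1` with `t ≤ r`, and distinct such sums are at least `2 ^ t - 1` apart, so before
position `2 ^ (t+1) - 1` the word `w_t` occurs only at `0` and `2 ^ t - 1`. An earlier copy
of `1w_t0` would put `w_t` strictly between these positions, and the two occurrences are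
followed by `00` and `10`, never by `11`.
-/

section Prefixes

variable {α : Type*} {a b c l s u v : List α} {i j : ℕ}

theorem prefix_drop_add_length (h : a ++ b <+: s.drop j) : b <+: s.drop (j + a.length) := by
  simpa [List.drop_drop] using h.drop a.length

theorem prefix_drop_of_prefix_eq_append (h : l <+: s) (hl : l = a ++ b ++ c)
    (hi : a.length = i) : b <+: s.drop i := by
  subst hl hi
  simpa using ((List.prefix_append _ c).trans h).drop a.length

theorem eq_of_append_prefix_of_append_prefix (hu : a ++ u <+: s) (hv : a ++ v <+: s)
    (huv : u.length = v.length) : u = v := by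
  rw [List.prefix_iff_eq_take] at hu hv
  refine List.append_cancel_left (as := a) ?_
  rw [hu, hv, List.length_append, List.length_append, huv]

end Prefixes

section GreedyParsing

variable {α : Type*} {P : List α → ℕ → ℕ → Prop} {s : List α} {i : ℕ}

theorem phrasesFrom_of_le (h : s.length ≤ i) : phrasesFrom P s i = [] := by
  rw [phrasesFrom, dif_neg (by omega)]

theorem length_phrasesFrom_of_lt (h : i < s.length) :
    (phrasesFrom P s i).length = (phrasesFrom P s (i + phraseLen P s i)).length + 1 := by
  rw [phrasesFrom, dif_pos h, List.length_cons]

theorem one_le_phraseLen : 1 ≤ phraseLen P s i := le_max_left _ _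

theorem le_phraseLen {m : ℕ} (hm : m ≤ s.length - i) (h : P s i m) : m ≤ phraseLen P s i :=
  le_max_of_le_right (Nat.le_findGreatest hm h)

theorem phraseLen_le {L : ℕ} (hL : 1 ≤ L) (h : ∀ m, L < m → m ≤ s.length - i → ¬ P s i m) :
    phraseLen P s i ≤ L := by
  refine max_le hL (not_lt.1 fun hlt => ?_)
  exact h _ hlt (Nat.findGreatest_le _) (Nat.findGreatest_of_ne_zero rfl (by omega))

theorem length_phrasesFrom_of_succ_eq (h : i + 1 = s.length) :
    (phrasesFrom P s i).length = 1 := by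
  have hlen : phraseLen P s i = 1 :=
    le_antisymm (phraseLen_le le_rfl fun m hm hms => by omega) one_le_phraseLen
  rw [length_phrasesFrom_of_lt (by omega), hlen, phrasesFrom_of_le (by omega), List.length_nil]

end GreedyParsing

section Permissions

variable {α : Type*} {s v w : List α} {i j : ℕ}

theorem phraseLen_permNov_le : phraseLen PermNov s i ≤ max 1 i :=
  phraseLen_le (le_max_left _ _) fun m hm _ ⟨j, hj, _⟩ => by omega

theorem phraseLen_permNov_of_le_one (hi : i ≤ 1) : phraseLen PermNov s i = 1 :=
  le_antisymm (phraseLen_permNov_le.trans (by omega)) one_le_phraseLen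

theorem phraseLen_permNov3_le : phraseLen PermNov3 s i ≤ i + 1 :=
  phraseLen_le (by omega) fun m hm _ ⟨j, hj, _⟩ => by omega

theorem le_phraseLen_permNov (hi : v <+: s.drop i) (hj : v <+: s.drop j)
    (hji : j + v.length ≤ i) : v.length ≤ phraseLen PermNov s i :=
  le_phraseLen (by simpa using hi.length_le)
    ⟨j, hji, by rw [← List.prefix_iff_eq_take.1 hi, ← List.prefix_iff_eq_take.1 hj]⟩

theorem le_phraseLen_permNov3 (hi : v <+: s.drop i) (hj : v <+: s.drop j)
    (hji : j + v.length ≤ i) (hlen : i + v.length < s.length) :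
    v.length + 1 ≤ phraseLen PermNov3 s i :=
  le_phraseLen (by omega) ⟨j, by simpa using hji, by
    rw [Nat.add_sub_cancel, ← List.prefix_iff_eq_take.1 hi, ← List.prefix_iff_eq_take.1 hj]⟩

theorem phraseLen_permNov_lt (hw : w <+: s.drop i) (hw2 : 2 ≤ w.length)
    (hnew : ∀ j, j + w.length ≤ i → ¬ w <+: s.drop j) : phraseLen PermNov s i < w.length := by
  suffices phraseLen PermNov s i ≤ w.length - 1 by omega
  refine phraseLen_le (by omega) fun m hm _ ⟨j, hj, he⟩ => hnew j (by omega) ?_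
  have hwm : w <+: (s.drop i).take m := List.prefix_take_iff.2 ⟨hw, by omega⟩
  rw [← he] at hwm
  exact hwm.trans (List.take_prefix _ _)

end Permissions

section MersenneSums

def mersenneSums (t K : ℕ) : Set ℕ :=
  {j | ∃ F ⊆ Finset.Ico t K, ∑ r ∈ F, mersenne r = j}

variable {t u K j : ℕ}

theorem zero_mem_mersenneSums : 0 ∈ mersenneSums t K := ⟨∅, by simp, by simp⟩

theorem mersenneSums_mono {K' : ℕ} (h : K ≤ K') : mersenneSums t K ⊆ mersenneSums t K' :=
  fun _ ⟨F, hF, hj⟩ => ⟨F, hF.trans (Finset.Ico_subset_Ico_right h), hj⟩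

theorem add_mersenne_mem_mersenneSums (hj : j ∈ mersenneSums t K) (htK : t ≤ K) :
    j + mersenne K ∈ mersenneSums t (K + 1) := by
  obtain ⟨F, hF, rfl⟩ := hj
  have hK : K ∉ F := fun h => by simpa using hF h
  refine ⟨insert K F, Finset.insert_subset (by simp [htK]) ?_, ?_⟩
  · exact hF.trans (Finset.Ico_subset_Ico_right (Nat.le_succ K))
  · rw [Finset.sum_insert hK, add_comm]

theorem sum_Ico_mersenne_add_le {m : ℕ} (hum : u ≤ m) :
    ∑ r ∈ Finset.Ico u m, mersenne r + mersenne u ≤ mersenne m := by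
  induction m, hum using Nat.le_induction with
  | base => simp
  | succ m hum ih =>
    rw [Finset.sum_Ico_succ_top hum, mersenne_succ]
    omega

theorem sum_add_mersenne_le_sum {F G : Finset ℕ} {m : ℕ} (hF : ∀ r ∈ F, u ≤ r)
    (hG : ∀ r ∈ G, u ≤ r) (hmG : m ∈ G) (hmF : m ∉ F) (hmax : ∀ r ∈ symmDiff F G, r ≤ m) :
    ∑ r ∈ F, mersenne r + mersenne u ≤ ∑ r ∈ G, mersenne r := by
  have hsub : F \ G ⊆ Finset.Ico u m := fun r hr => by
    have hrm := hmax r (Finset.mem_symmDiff.2 (Or.inl (Finset.mem_sdiff.1 hr)))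
    have hne : r ≠ m := fun h => hmF (h ▸ (Finset.mem_sdiff.1 hr).1)
    exact Finset.mem_Ico.2 ⟨hF r (Finset.mem_sdiff.1 hr).1, lt_of_le_of_ne hrm hne⟩
  have hFG := (Nat.add_le_add_right (Finset.sum_le_sum_of_subset hsub) _).trans
    (sum_Ico_mersenne_add_le (hG m hmG))
  have hGF : mersenne m ≤ ∑ r ∈ G \ F, mersenne r :=
    Finset.single_le_sum (fun _ _ => Nat.zero_le _) (Finset.mem_sdiff.2 ⟨hmG, hmF⟩)
  rw [← Finset.sum_inter_add_sum_sdiff F G, ← Finset.sum_inter_add_sum_sdiff G F,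
    Finset.inter_comm]
  omega

theorem add_mersenne_le_of_mem_mersenneSums {j₁ j₂ : ℕ} (h₁ : j₁ ∈ mersenneSums u K)
    (h₂ : j₂ ∈ mersenneSums u K) (hlt : j₁ < j₂) : j₁ + mersenne u ≤ j₂ := by
  obtain ⟨F, hF, rfl⟩ := h₁
  obtain ⟨G, hG, rfl⟩ := h₂
  have hne : (symmDiff F G).Nonempty := by
    rw [Finset.nonempty_iff_ne_empty, Ne, Finset.symmDiff_eq_empty]
    rintro rfl
    exact lt_irrefl _ hlt
  have hmax : ∀ r ∈ symmDiff F G, r ≤ (symmDiff F G).max' hne := Finset.le_max' _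
  have hFu : ∀ r ∈ F, u ≤ r := fun r hr => (Finset.mem_Ico.1 (hF hr)).1
  have hGu : ∀ r ∈ G, u ≤ r := fun r hr => (Finset.mem_Ico.1 (hG hr)).1
  rcases Finset.mem_symmDiff.1 (Finset.max'_mem _ hne) with ⟨hmF, hmG⟩ | ⟨hmG, hmF⟩
  · have := sum_add_mersenne_le_sum hGu hFu hmF hmG (by rwa [symmDiff_comm])
    omega
  · exact sum_add_mersenne_le_sum hFu hGu hmG hmF hmax

theorem mem_mersenneSums_succ_or (hj : j ∈ mersenneSums t K) :
    j ∈ mersenneSums (t + 1) K ∨ ∃ d ∈ mersenneSums (t + 1) K, j = mersenne t + d := by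
  obtain ⟨F, hF, rfl⟩ := hj
  have hsub : ∀ r ∈ F, r ≠ t → r ∈ Finset.Ico (t + 1) K := fun r hr hrt => by
    have := Finset.mem_Ico.1 (hF hr)
    exact Finset.mem_Ico.2 ⟨by omega, this.2⟩
  by_cases ht : t ∈ F
  · refine Or.inr ⟨_, ⟨F.erase t, fun r hr => hsub r (Finset.mem_of_mem_erase hr)
      (Finset.ne_of_mem_erase hr), rfl⟩, (Finset.add_sum_erase _ _ ht).symm⟩
  · exact Or.inl ⟨F, fun r hr => hsub r hr fun h => ht (h ▸ hr), rfl⟩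

theorem mem_mersenneSums_succ_of_add_mem (ht : 1 ≤ t) (hj : j ∈ mersenneSums t K)
    (hj' : j + mersenne t ∈ mersenneSums t K) : j ∈ mersenneSums (t + 1) K := by
  have hpos : 0 < mersenne t := mersenne_pos.2 ht
  have hsucc := mersenne_succ t
  rcases mem_mersenneSums_succ_or hj with hj | ⟨d, hd, rfl⟩
  · exact hj
  exfalso
  rcases mem_mersenneSums_succ_or hj' with he | ⟨e, he, hde⟩
  · have := add_mersenne_le_of_mem_mersenneSums hd he (by omega)
    omega
  · have := add_mersenne_le_of_mem_mersenneSums hd he (by omega)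
    omega

theorem eq_zero_or_eq_mersenne_of_mem_mersenneSums (hj : j ∈ mersenneSums t K)
    (hlt : j < mersenne (t + 1)) : j = 0 ∨ j = mersenne t := by
  rcases mem_mersenneSums_succ_or hj with hj | ⟨d, hd, rfl⟩
  · by_contra h
    have := add_mersenne_le_of_mem_mersenneSums zero_mem_mersenneSums hj (by omega)
    omega
  · by_contra h
    have := add_mersenne_le_of_mem_mersenneSums zero_mem_mersenneSums hd (by omega)
    omega

end MersenneSums

def doublingWord : ℕ → List (Fin 2)
  | 0 => []
  | 1 => [0]
  | n + 2 => doublingWord (n + 1) ++ doublingWord (n + 1) ++ [1]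

section DoublingWord

variable {t k K j : ℕ}

theorem doublingWord_succ (hk : k ≠ 0) :
    doublingWord (k + 1) = doublingWord k ++ doublingWord k ++ [1] := by
  obtain ⟨n, rfl⟩ := Nat.exists_eq_succ_of_ne_zero hk
  rfl

theorem length_doublingWord (k : ℕ) : (doublingWord k).length = mersenne k := by
  induction k with
  | zero => rfl
  | succ k ih =>
    rcases eq_or_ne k 0 with rfl | hk
    · rfl
    · simp only [doublingWord_succ hk, List.length_append, ih, List.length_singleton,
        mersenne_succ]
      omega

theorem length_doublingWord_succ (k : ℕ) :
    (doublingWord (k + 1)).length = 2 * (doublingWord k).length + 1 := by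
  rw [length_doublingWord, length_doublingWord, mersenne_succ]

theorem doublingWord_prefix_of_le (h : t ≤ K) : doublingWord t <+: doublingWord K := by
  induction K, h using Nat.le_induction with
  | base => exact List.prefix_refl _
  | succ K htK ih =>
    rcases eq_or_ne K 0 with rfl | hK
    · rw [Nat.le_zero.1 htK]
      exact List.nil_prefix
    · rw [doublingWord_succ hK, List.append_assoc]
      exact ih.trans (List.prefix_append _ _)

theorem append_self_prefix_doublingWord_succ (t : ℕ) :
    doublingWord t ++ doublingWord t <+: doublingWord (t + 1) := by
  rcases eq_or_ne t 0 with rfl | ht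
  · exact List.nil_prefix
  · rw [doublingWord_succ ht]
    exact List.prefix_append _ _

theorem doublingWord_two_levels_prefix (ht : 1 ≤ t) (hK : t + 2 ≤ K) :
    doublingWord t ++ doublingWord t ++ [1] ++ doublingWord t ++ doublingWord t ++ [1] ++ [1] <+:
      doublingWord K := by
  have h := doublingWord_prefix_of_le hK
  rw [doublingWord_succ (by omega), doublingWord_succ (by omega)] at h
  simpa using h

theorem exists_doublingWord_eq_zero_zero_cons (ht : 2 ≤ t) :
    ∃ Q, doublingWord t = 0 :: 0 :: Q := by
  obtain ⟨r, hr⟩ := doublingWord_prefix_of_le ht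
  exact ⟨1 :: r, hr.symm⟩

theorem exists_doublingWord_eq_append_one (ht : 2 ≤ t) :
    ∃ P, doublingWord t = P ++ [1] := by
  obtain ⟨k, rfl⟩ := Nat.exists_eq_add_of_le' ht
  exact ⟨_, doublingWord_succ (by omega)⟩

theorem mem_mersenneSums_of_getElem?_eq_zero (h : (doublingWord K)[j]? = some 0) :
    j ∈ mersenneSums 1 K := by
  induction K generalizing j with
  | zero => simp [doublingWord] at h
  | succ K ih =>
    rcases eq_or_ne K 0 with rfl | hK
    · obtain rfl : j = 0 := by rcases j with _ | j <;> simp [doublingWord] at h ⊢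
      exact zero_mem_mersenneSums
    have hlen := length_doublingWord K
    rw [doublingWord_succ hK, List.append_assoc] at h
    rcases lt_or_ge j (doublingWord K).length with hj | hj
    · rw [List.getElem?_append_left hj] at h
      exact mersenneSums_mono (Nat.le_succ K) (ih h)
    rw [List.getElem?_append_right hj] at h
    rcases lt_or_ge (j - (doublingWord K).length) (doublingWord K).length with hj' | hj'
    · rw [List.getElem?_append_left hj'] at h
      have := add_mersenne_mem_mersenneSums (ih h) (by omega)
      rwa [← hlen, Nat.sub_add_cancel hj] at this
    · rw [List.getElem?_append_right hj'] at h
      simp [List.getElem?_cons] at h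

theorem mem_mersenneSums_of_prefix_drop (ht : 1 ≤ t)
    (h : doublingWord t <+: (doublingWord K).drop j) : j ∈ mersenneSums t K := by
  induction t, ht using Nat.le_induction generalizing j with
  | base =>
    obtain ⟨r, hr⟩ := h
    apply mem_mersenneSums_of_getElem?_eq_zero
    simpa [doublingWord] using (congrArg List.head? hr).symm
  | succ t ht ih =>
    rw [doublingWord_succ (by omega)] at h
    have h₂ : doublingWord t ++ doublingWord t <+: (doublingWord K).drop j :=
      (List.prefix_append _ _).trans h
    refine mem_mersenneSums_succ_of_add_mem ht (ih ((List.prefix_append _ _).trans h₂)) ?_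
    rw [← length_doublingWord]
    exact ih (prefix_drop_add_length h₂)

theorem eq_zero_or_eq_length_of_prefix_drop (ht : 1 ≤ t)
    (h : doublingWord t <+: (doublingWord K).drop j)
    (hj : j < 2 * (doublingWord t).length + 1) : j = 0 ∨ j = (doublingWord t).length := by
  rw [length_doublingWord, ← mersenne_succ] at *
  exact eq_zero_or_eq_mersenne_of_mem_mersenneSums (mem_mersenneSums_of_prefix_drop ht h) hj

end DoublingWord

section NovLZ3

variable {t K : ℕ}

theorem phraseLen_permNov3_doublingWord (htK : t < K) :
    phraseLen PermNov3 (doublingWord K) (doublingWord t).length =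
      (doublingWord t).length + 1 := by
  have hA : doublingWord t ++ doublingWord t <+: doublingWord K :=
    (append_self_prefix_doublingWord_succ t).trans (doublingWord_prefix_of_le htK)
  have hlen := (doublingWord_prefix_of_le htK).length_le
  rw [length_doublingWord_succ] at hlen
  refine le_antisymm phraseLen_permNov3_le
    (le_phraseLen_permNov3 (j := 0) ?_ ?_ (Nat.zero_add _).le (by omega))
  · exact prefix_drop_of_prefix_eq_append hA (c := []) (by simp) rfl
  · exact prefix_drop_of_prefix_eq_append hA (a := []) rfl rfl

theorem length_phrasesFrom_permNov3_doublingWord (t d : ℕ) :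
    (phrasesFrom PermNov3 (doublingWord (t + d)) (doublingWord t).length).length = d := by
  induction d generalizing t with
  | zero => rw [Nat.add_zero, phrasesFrom_of_le le_rfl, List.length_nil]
  | succ d ih =>
    have hlen := (doublingWord_prefix_of_le (Nat.le_add_right (t + 1) d)).length_le
    rw [length_doublingWord_succ] at hlen
    rw [← add_assoc, add_right_comm, length_phrasesFrom_of_lt (by omega),
      phraseLen_permNov3_doublingWord (by omega), ← add_assoc, ← two_mul,
      ← length_doublingWord_succ, ih]

theorem zNov3_doublingWord (K : ℕ) : zNov3 (doublingWord K) = K := by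
  simpa [zNov3, novlz3Phrases, doublingWord] using length_phrasesFrom_permNov3_doublingWord 0 K

end NovLZ3

section TwoLevels

variable {s A P Q : List (Fin 2)}

theorem phraseLen_permNov_two_mul
    (hs : A ++ A ++ [1] ++ A ++ A ++ [1] ++ [1] <+: s) (hP : A = P ++ [1]) (hQ : A = 0 :: 0 :: Q)
    (hocc : ∀ j, A <+: s.drop j → j < 2 * A.length + 1 → j = 0 ∨ j = A.length) :
    phraseLen PermNov s (2 * A.length) = A.length + 1 := by
  have hv : 1 :: A <+: s.drop P.length :=
    prefix_drop_of_prefix_eq_append hs (c := [1] ++ A ++ A ++ [1] ++ [1]) (by subst hP; simp) rfl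
  have hw : 1 :: A ++ [0] <+: s.drop (2 * A.length) :=
    prefix_drop_of_prefix_eq_append hs (a := A ++ A) (c := 0 :: Q ++ [1, 1])
      (by subst hQ; simp) (by rw [List.length_append, two_mul])
  have hPlen : P.length + 1 = A.length := by simp [hP]
  refine le_antisymm (Nat.le_of_lt_succ ?_) ?_
  · refine (phraseLen_permNov_lt hw (by simp) fun j hj hwj => ?_).trans_eq (by simp)
    have hAj : A <+: s.drop (j + 1) :=
      prefix_drop_add_length (a := [1]) ((List.prefix_append _ _).trans hwj)
    simp only [List.length_append, List.length_cons] at hj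
    have := hocc _ hAj (by omega)
    omega
  · simpa using le_phraseLen_permNov ((List.prefix_append _ [0]).trans hw) hv
      (by simp only [List.length_cons]; omega)

theorem phraseLen_permNov_three_mul_add_one
    (hs : A ++ A ++ [1] ++ A ++ A ++ [1] ++ [1] <+: s) (hQ : A = 0 :: 0 :: Q)
    (hocc : ∀ j, A <+: s.drop j → j < 2 * A.length + 1 → j = 0 ∨ j = A.length) :
    phraseLen PermNov s (3 * A.length + 1) = A.length + 1 := by
  have hv : A ++ [1] <+: s.drop A.length :=
    prefix_drop_of_prefix_eq_append hs (c := A ++ A ++ [1, 1]) (by simp) rfl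
  have hw : A ++ [1, 1] <+: s.drop (3 * A.length + 1) :=
    prefix_drop_of_prefix_eq_append hs (a := A ++ A ++ [1] ++ A) (c := []) (by simp)
      (by simp only [List.length_append, List.length_singleton]; ring)
  have h₀ : A ++ [0, 0] <+: s.drop 0 :=
    prefix_drop_of_prefix_eq_append hs (a := []) (c := Q ++ [1] ++ A ++ A ++ [1, 1])
      (by subst hQ; simp) rfl
  have h₁ : A ++ [1, 0] <+: s.drop A.length :=
    prefix_drop_of_prefix_eq_append hs (c := 0 :: Q ++ A ++ [1, 1]) (by subst hQ; simp) rfl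
  refine le_antisymm (Nat.le_of_lt_succ ?_) ?_
  · refine (phraseLen_permNov_lt hw (by simp) fun j hj hwj => ?_).trans_eq (by simp)
    simp only [List.length_append, List.length_cons, List.length_nil] at hj
    rcases hocc j ((List.prefix_append _ _).trans hwj) (by omega) with rfl | rfl
    · simpa using eq_of_append_prefix_of_append_prefix h₀ hwj rfl
    · simpa using eq_of_append_prefix_of_append_prefix h₁ hwj rfl
  · simpa using le_phraseLen_permNov ((List.prefix_append (A ++ [1]) [1]).trans (by simpa using hw))
      hv (by simp only [List.length_append, List.length_cons, List.length_nil]; omega)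

end TwoLevels

section NovLZ

variable {t K : ℕ}

theorem length_phrasesFrom_permNov_doublingWord (ht : 2 ≤ t) (d : ℕ) :
    (phrasesFrom PermNov (doublingWord (t + 1 + d)) (2 * (doublingWord t).length)).length =
      2 * d + 1 := by
  induction d generalizing t with
  | zero => exact length_phrasesFrom_of_succ_eq (length_doublingWord_succ t).symm
  | succ d ih =>
    have hs := doublingWord_two_levels_prefix (t := t) (K := t + 1 + (d + 1)) (by omega) (by omega)
    have hocc := fun j => eq_zero_or_eq_length_of_prefix_drop (K := t + 1 + (d + 1)) (j := j)
      (by omega : 1 ≤ t)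
    obtain ⟨P, hP⟩ := exists_doublingWord_eq_append_one ht
    obtain ⟨Q, hQ⟩ := exists_doublingWord_eq_zero_zero_cons ht
    have hlen := hs.length_le
    simp only [List.length_append, List.length_singleton] at hlen
    rw [length_phrasesFrom_of_lt (by omega), phraseLen_permNov_two_mul hs hP hQ hocc,
      length_phrasesFrom_of_lt (by omega),
      show 2 * _ + (_ + 1) = 3 * (doublingWord t).length + 1 by ring,
      phraseLen_permNov_three_mul_add_one hs hQ hocc,
      show 3 * _ + 1 + (_ + 1) = 2 * (doublingWord (t + 1)).length by
        rw [length_doublingWord_succ]; ring,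
      show t + 1 + (d + 1) = t + 1 + 1 + d by ring, ih (by omega)]
    ring

theorem phraseLen_permNov_doublingWord_two (hK : 3 ≤ K) :
    phraseLen PermNov (doublingWord K) 2 = 1 := by
  have hs : [0, 0, 1, 0, 0, 1, 1] <+: doublingWord K := doublingWord_prefix_of_le hK
  have h₀ : [0, 0] <+: (doublingWord K).drop 0 :=
    prefix_drop_of_prefix_eq_append hs (a := []) (c := [1, 0, 0, 1, 1]) rfl rfl
  have h₂ : [1, 0] <+: (doublingWord K).drop 2 :=
    prefix_drop_of_prefix_eq_append hs (a := [0, 0]) (c := [0, 1, 1]) rfl rfl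
  refine le_antisymm (Nat.le_of_lt_succ (phraseLen_permNov_lt h₂ le_rfl fun j hj hj₂ => ?_))
    one_le_phraseLen
  obtain rfl : j = 0 := by simp only [List.length_cons, List.length_nil] at hj; omega
  simpa using eq_of_append_prefix_of_append_prefix (a := []) h₀ hj₂ rfl

theorem phraseLen_permNov_doublingWord_three (hK : 3 ≤ K) :
    phraseLen PermNov (doublingWord K) 3 = 3 := by
  have hs : [0, 0, 1] ++ [0, 0, 1] <+: doublingWord K :=
    (append_self_prefix_doublingWord_succ 2).trans (doublingWord_prefix_of_le hK)
  exact le_antisymm phraseLen_permNov_le (le_phraseLen_permNov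
    (prefix_drop_of_prefix_eq_append hs (a := [0, 0, 1]) (c := []) (by simp) rfl)
    (prefix_drop_of_prefix_eq_append hs (a := []) (i := 0) rfl rfl) le_rfl)

theorem zNov_doublingWord_succ (K : ℕ) : zNov (doublingWord (K + 1)) = 2 * K + 1 := by
  unfold zNov novlzPhrases
  obtain _ | _ | k := K
  · exact length_phrasesFrom_of_succ_eq rfl
  · rw [length_phrasesFrom_of_lt (by decide), phraseLen_permNov_of_le_one zero_le_one,
      length_phrasesFrom_of_lt (by decide), phraseLen_permNov_of_le_one le_rfl,
      length_phrasesFrom_of_succ_eq rfl]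
  · show (phrasesFrom PermNov (doublingWord (k + 3)) 0).length = 2 * (k + 2) + 1
    have hlen : 7 ≤ (doublingWord (k + 3)).length :=
      (doublingWord_prefix_of_le (t := 3) (by omega)).length_le
    have hrest := length_phrasesFrom_permNov_doublingWord (t := 2) le_rfl k
    rw [show 2 + 1 + k = k + 3 by ring, show (doublingWord 2).length = 3 from rfl] at hrest
    rw [length_phrasesFrom_of_lt (by omega), phraseLen_permNov_of_le_one zero_le_one,
      length_phrasesFrom_of_lt (by omega), phraseLen_permNov_of_le_one le_rfl,
      length_phrasesFrom_of_lt (by omega), phraseLen_permNov_doublingWord_two (by omega),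
      length_phrasesFrom_of_lt (by omega), phraseLen_permNov_doublingWord_three (by omega)]
    rw [show 0 + 1 + 1 + 1 + 3 = 2 * 3 from rfl, hrest]
    ring

end NovLZ

/-- For every integer `k ≥ 1` there is a binary string whose novLZ3 parsing has size `k`
and whose novLZ parsing has size `2k - 1`. -/
theorem exists_zNov3_half_zNov (k : ℕ) (hk : 1 ≤ k) :
    ∃ s : List (Fin 2), zNov3 s = k ∧ zNov s = 2 * k - 1 := by
  obtain ⟨K, rfl⟩ := Nat.exists_eq_add_of_le' hk
  exact ⟨doublingWord (K + 1), zNov3_doublingWord _, by rw [zNov_doublingWord_succ]; omega⟩
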